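/- Let T > 0, let A : ℝ → ℍ^{n×n} be continuous with A(t+T) = A(t), let M be a fundamental matrix of ẋ = A(t)x, and let ρ₁, …, ρₙ be the characteristic multipliers (the standard eigenvalues of the monodromy matrix M(0)⁻¹M(T), with multiplicity). Then ∏_{j=1}^n |ρ_j| = exp(∫₀^T Re(tr A(τ)) dτ). Consequently, if μ₁, …, μₙ ∈ ℂ satisfy e^{μ_j T} = ρ_j for each j, then Re(Σ_{j=1}^n μ_j) = (1/T)·∫₀^T Re(tr A(τ)) dτ. -/

import Mathlib

open Matrix Polynomial
open scoped Quaternion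

noncomputable section

/-- The two complex components of a quaternion: `q = c1 q + (c2 q) * j`,
identifying `ℂ` with the real span of `1` and `i` in `ℍ`. -/
def Quaternion.c1 (q : ℍ[ℝ]) : ℂ := ⟨q.re, q.imI⟩

def Quaternion.c2 (q : ℍ[ℝ]) : ℂ := ⟨q.imJ, q.imK⟩

/-- The embedding of `ℂ` into `ℍ` as the real span of `1` and `i`. -/
def Complex.toQuat (z : ℂ) : ℍ[ℝ] := ⟨z.re, z.im, 0, 0⟩

/-- The complex adjoint matrix `χ_A` of a quaternion matrix `A = A₁ + A₂·j`:
the block matrix `[[A₁, A₂], [-conj A₂, conj A₁]]`. -/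
def chiMat {n : ℕ} (A : Matrix (Fin n) (Fin n) ℍ[ℝ]) :
    Matrix (Fin n ⊕ Fin n) (Fin n ⊕ Fin n) ℂ :=
  Matrix.fromBlocks (A.map Quaternion.c1) (A.map Quaternion.c2)
    ((-(A.map Quaternion.c2)).map (starRingEnd ℂ)) ((A.map Quaternion.c1).map (starRingEnd ℂ))

/-- `ρ` is a standard eigenvalue of the quaternion matrix `A`: an eigenvalue of the
complex adjoint matrix `χ_A` with nonnegative imaginary part. -/
def IsStdEigenvalue {n : ℕ} (A : Matrix (Fin n) (Fin n) ℍ[ℝ]) (ρ : ℂ) : Prop :=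
  (chiMat A).charpoly.IsRoot ρ ∧ 0 ≤ ρ.im

/-- `s` is the multiset of standard eigenvalues of `A` counted with multiplicity:
it has `n` elements, all with nonnegative imaginary part, and the characteristic
polynomial of `χ_A` is `∏_{z ∈ s} (X - z)·(X - conj z)`. -/
def IsStdEigs {n : ℕ} (A : Matrix (Fin n) (Fin n) ℍ[ℝ]) (s : Multiset ℂ) : Prop :=
  Multiset.card s = n ∧ (∀ z ∈ s, 0 ≤ z.im) ∧
    (chiMat A).charpoly =
      (s.map (fun z => (X - C z) * (X - C (starRingEnd ℂ z)))).prod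

/-- `x : ℝ → ℍ^n` is a solution of the linear quaternionic system `ẋ = A(t)x`. -/
def IsSol {n : ℕ} (A : ℝ → Matrix (Fin n) (Fin n) ℍ[ℝ]) (x : ℝ → Fin n → ℍ[ℝ]) : Prop :=
  ∀ t : ℝ, HasDerivAt x ((A t).mulVec (x t)) t

/-- The norm `‖x‖ = Σ_k |x_k|` on `ℍ^n`. -/
def vecNorm {n : ℕ} (x : Fin n → ℍ[ℝ]) : ℝ := ∑ k, ‖x k‖

/-- The norm `‖A‖ = Σ_{i,j} |a_{ij}|` on `ℍ^{n×n}`. -/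
def matNorm {n : ℕ} (A : Matrix (Fin n) (Fin n) ℍ[ℝ]) : ℝ := ∑ i, ∑ j, ‖A i j‖

/-- Stability (in the sense of Lyapunov) of the system `ẋ = A(t)x` at `t₀`. -/
def StableAt {n : ℕ} (A : ℝ → Matrix (Fin n) (Fin n) ℍ[ℝ]) (t₀ : ℝ) : Prop :=
  ∀ ε > (0:ℝ), ∃ δ > (0:ℝ), ∀ x : ℝ → Fin n → ℍ[ℝ], IsSol A x →
    vecNorm (x t₀) < δ → ∀ t ≥ t₀, vecNorm (x t) < ε

/-- Asymptotic stability of the system `ẋ = A(t)x` at `t₀`. -/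
def AsympStableAt {n : ℕ} (A : ℝ → Matrix (Fin n) (Fin n) ℍ[ℝ]) (t₀ : ℝ) : Prop :=
  StableAt A t₀ ∧ ∃ δ > (0:ℝ), ∀ x : ℝ → Fin n → ℍ[ℝ], IsSol A x →
    vecNorm (x t₀) < δ →
      Filter.Tendsto (fun t => vecNorm (x t)) Filter.atTop (nhds 0)

/-- `M` is a fundamental matrix of `ẋ = A(t)x`: entrywise `M'(t) = A(t)·M(t)`
and `M(t)` is invertible for every `t`. -/
def IsFundamental {n : ℕ} (A M : ℝ → Matrix (Fin n) (Fin n) ℍ[ℝ]) : Prop :=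
  (∀ (t : ℝ) (i j : Fin n), HasDerivAt (fun s => M s i j) ((A t * M t) i j) t) ∧
    ∀ t : ℝ, IsUnit (M t)

/-! The complex adjoint `χ` is multiplicative, so `χ(M)` solves the complex system
`Ẏ = χ(A) Y`, and Liouville's formula gives `det χ(M T) = det χ(M 0) · exp ∫₀ᵀ tr χ(A)`,
where `tr χ(A) = 2 Re tr A`. Hence the determinant of `χ` of the monodromy matrix is
`exp (2 ∫₀ᵀ Re tr A)`. Since its characteristic polynomial is `∏ⱼ (X - ρⱼ)(X - ρ̄ⱼ)`, that
determinant is also `∏ⱼ |ρⱼ|²`. Finally `|ρⱼ| = |exp (μⱼ T)| = exp (T Re μⱼ)`. -/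

namespace Quaternion

def c1LinearMap : ℍ[ℝ] →ₗ[ℝ] ℂ where
  toFun := c1
  map_add' p q := by simp [c1, Complex.ext_iff]
  map_smul' r q := by simp [c1, Complex.ext_iff]

def c2LinearMap : ℍ[ℝ] →ₗ[ℝ] ℂ where
  toFun := c2
  map_add' p q := by simp [c2, Complex.ext_iff]
  map_smul' r q := by simp [c2, Complex.ext_iff]

lemma c1_sum {ι : Type*} (s : Finset ι) (f : ι → ℍ[ℝ]) : c1 (∑ k ∈ s, f k) = ∑ k ∈ s, c1 (f k) :=
  map_sum c1LinearMap f s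

lemma c2_sum {ι : Type*} (s : Finset ι) (f : ι → ℍ[ℝ]) : c2 (∑ k ∈ s, f k) = ∑ k ∈ s, c2 (f k) :=
  map_sum c2LinearMap f s

lemma c1_mul (p q : ℍ[ℝ]) : c1 (p * q) = c1 p * c1 q - c2 p * starRingEnd ℂ (c2 q) := by
  simp only [c1, c2, Complex.ext_iff, re_mul, imI_mul, Complex.sub_re, Complex.sub_im,
    Complex.mul_re, Complex.mul_im, Complex.conj_re, Complex.conj_im]
  constructor <;> ring

lemma c2_mul (p q : ℍ[ℝ]) : c2 (p * q) = c1 p * c2 q + c2 p * starRingEnd ℂ (c1 q) := by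
  simp only [c1, c2, Complex.ext_iff, imJ_mul, imK_mul, Complex.add_re, Complex.add_im,
    Complex.mul_re, Complex.mul_im, Complex.conj_re, Complex.conj_im]
  constructor <;> ring

lemma c1_add_conj_c1 (q : ℍ[ℝ]) : c1 q + starRingEnd ℂ (c1 q) = 2 * (q.re : ℂ) := by
  simp [c1, Complex.ext_iff]; ring

end Quaternion

open Quaternion

lemma HasDerivAt.quaternion_c1 {f : ℝ → ℍ[ℝ]} {f' : ℍ[ℝ]} {x : ℝ} (hf : HasDerivAt f f' x) :
    HasDerivAt (fun t => c1 (f t)) (c1 f') x :=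
  (LinearMap.toContinuousLinearMap c1LinearMap).hasFDerivAt.comp_hasDerivAt x hf

lemma HasDerivAt.quaternion_c2 {f : ℝ → ℍ[ℝ]} {f' : ℍ[ℝ]} {x : ℝ} (hf : HasDerivAt f f' x) :
    HasDerivAt (fun t => c2 (f t)) (c2 f') x :=
  (LinearMap.toContinuousLinearMap c2LinearMap).hasFDerivAt.comp_hasDerivAt x hf

section ComplexAdjoint

variable {n : ℕ}

lemma chiMat_one : chiMat (1 : Matrix (Fin n) (Fin n) ℍ[ℝ]) = 1 := by
  ext (i|i) (j|j) <;> by_cases h : i = j <;> simp [chiMat, one_apply, h, c1, c2, Complex.ext_iff]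

lemma chiMat_mul (X Y : Matrix (Fin n) (Fin n) ℍ[ℝ]) :
    chiMat (X * Y) = chiMat X * chiMat Y := by
  ext (i|i) (j|j) <;>
    simp only [chiMat, mul_apply, fromBlocks_apply₁₁, fromBlocks_apply₁₂,
      fromBlocks_apply₂₁, fromBlocks_apply₂₂, map_apply, Matrix.neg_apply,
      Fintype.sum_sum_type, c1_sum, c2_sum, c1_mul, c2_mul, map_sum, _root_.map_mul, map_sub,
      map_add, map_neg, Complex.conj_conj, Finset.sum_add_distrib, Finset.sum_sub_distrib,
      neg_mul, mul_neg, Finset.sum_neg_distrib] <;>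
    ring

lemma trace_chiMat (X : Matrix (Fin n) (Fin n) ℍ[ℝ]) :
    (chiMat X).trace = 2 * ((X.trace.re : ℝ) : ℂ) := by
  simp only [trace, Fintype.sum_sum_type, diag_apply, chiMat, fromBlocks_apply₁₁,
    fromBlocks_apply₂₂, map_apply, ← Finset.sum_add_distrib, c1_add_conj_c1, ← Finset.mul_sum,
    ← Complex.ofReal_sum]
  exact congrArg (fun r : ℝ => 2 * (r : ℂ))
    (map_sum (QuaternionAlgebra.reₗ (-1 : ℝ) 0 (-1)) _ _).symm

lemma det_chiMat_inverse_mul_det_chiMat {X : Matrix (Fin n) (Fin n) ℍ[ℝ]} (hX : IsUnit X) :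
    (chiMat (Ring.inverse X)).det * (chiMat X).det = 1 := by
  rw [← det_mul, ← chiMat_mul, Ring.inverse_mul_cancel _ hX, chiMat_one, det_one]

lemma HasDerivAt.chiMat_apply {M : ℝ → Matrix (Fin n) (Fin n) ℍ[ℝ]}
    {M' : Matrix (Fin n) (Fin n) ℍ[ℝ]} {x : ℝ}
    (h : ∀ i j, HasDerivAt (fun t => M t i j) (M' i j) x) (p q : Fin n ⊕ Fin n) :
    HasDerivAt (fun t => chiMat (M t) p q) (chiMat M' p q) x := by
  rcases p with i | i <;> rcases q with j | j
  · exact (h i j).quaternion_c1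
  · exact (h i j).quaternion_c2
  · simpa [chiMat, RCLike.star_def] using (h i j).quaternion_c2.star.fun_neg
  · simpa [chiMat, RCLike.star_def] using (h i j).quaternion_c1.star

lemma det_chiMat_of_isStdEigs {X : Matrix (Fin n) (Fin n) ℍ[ℝ]} {s : Multiset ℂ}
    (hs : IsStdEigs X s) : (chiMat X).det = (((s.map fun z => ‖z‖ ^ 2).prod : ℝ) : ℂ) := by
  have hcard : Fintype.card (Fin n ⊕ Fin n) = n + n := by simp
  rw [det_eq_sign_charpoly_coeff, hs.2.2, coeff_zero_eq_eval_zero, hcard,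
    Even.neg_one_pow ⟨n, rfl⟩, one_mul, eval_multiset_prod, Multiset.map_map,
    ← Complex.ofRealHom_eq_coe, map_multiset_prod, Multiset.map_map]
  congr 1
  refine Multiset.map_congr rfl fun z _ => ?_
  simp [Complex.mul_conj, Complex.sq_norm]

end ComplexAdjoint

section DetDeriv

open Finset

variable {𝕜 𝔸 m : Type*} [NontriviallyNormedField 𝕜] [NormedCommRing 𝔸] [NormedAlgebra 𝕜 𝔸]
  [Fintype m] [DecidableEq m]

lemma Matrix.hasDerivAt_det {N : 𝕜 → Matrix m m 𝔸} {N' : Matrix m m 𝔸} {x : 𝕜}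
    (h : ∀ i j, HasDerivAt (fun t => N t i j) (N' i j) x) :
    HasDerivAt (fun t => (N t).det) (∑ i, ((N x).updateRow i (N' i)).det) x := by
  have hterm (σ : Equiv.Perm m) : HasDerivAt (fun t => (σ.sign : 𝔸) * ∏ i, N t (σ i) i)
      ((σ.sign : 𝔸) * ∑ i, (∏ j ∈ univ.erase i, N x (σ j) j) • N' (σ i) i) x :=
    (HasDerivAt.fun_finsetProd fun i _ => h (σ i) i).const_mul _
  simp_rw [det_apply']
  refine (HasDerivAt.fun_sum fun σ _ => hterm σ).congr_deriv ?_
  rw [Finset.sum_comm]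
  refine Finset.sum_congr rfl fun σ _ => ?_
  rw [← Finset.mul_sum, ← Equiv.sum_comp σ fun i => ∏ j, (N x).updateRow i (N' i) (σ j) j]
  congr 1
  refine Finset.sum_congr rfl fun k _ => ?_
  rw [← Finset.mul_prod_erase _ _ (mem_univ k), updateRow_self, smul_eq_mul, mul_comm]
  congr 1
  refine Finset.prod_congr rfl fun j hj => ?_
  rw [updateRow_ne fun hc => ne_of_mem_erase hj (σ.injective hc)]

lemma Matrix.hasDerivAt_det_of_hasDerivAt_eq_mul {N : 𝕜 → Matrix m m 𝔸} {B : Matrix m m 𝔸}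
    {x : 𝕜} (h : ∀ i j, HasDerivAt (fun t => N t i j) ((B * N x) i j) x) :
    HasDerivAt (fun t => (N t).det) (B.trace * (N x).det) x := by
  -- Replacing row `i` of `N x` by row `i` of `B * N x`, a combination of the rows of `N x`,
  -- multiplies the determinant by `B i i`.
  convert hasDerivAt_det h using 1
  have hrow (i : m) : (B * N x) i = ∑ k, B i k • N x k := by
    ext j
    simp [mul_apply]
  simp only [hrow, det_updateRow_sum, trace, diag_apply, Finset.sum_mul, smul_eq_mul]

end DetDeriv

lemma eq_mul_exp_integral_of_hasDerivAt_eq_mul {f g : ℝ → ℂ} (hf : Continuous f)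
    (hg : ∀ t, HasDerivAt g (f t * g t) t) (a b : ℝ) :
    g b = g a * Complex.exp (∫ t in a..b, f t) := by
  set F : ℝ → ℂ := fun u => ∫ t in a..u, f t
  have hF (t : ℝ) : HasDerivAt F (f t) t := (hf.integral_hasStrictDerivAt a t).hasDerivAt
  have hconst (t : ℝ) : HasDerivAt (fun u => g u * Complex.exp (-F u)) 0 t := by
    refine ((hg t).fun_mul (hF t).neg.cexp).congr_deriv ?_
    ring
  have hba := is_const_of_deriv_eq_zero (fun t => (hconst t).differentiableAt)
    (fun t => (hconst t).deriv) b a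
  simp only [F, intervalIntegral.integral_same, neg_zero, Complex.exp_zero, mul_one] at hba
  rw [← hba, mul_assoc, ← Complex.exp_add, neg_add_cancel, Complex.exp_zero, mul_one]

lemma det_chiMat_eq_mul_exp_integral {n : ℕ} {A M : ℝ → Matrix (Fin n) (Fin n) ℍ[ℝ]}
    (hA : Continuous A)
    (hM : ∀ (t : ℝ) (i j : Fin n), HasDerivAt (fun s => M s i j) ((A t * M t) i j) t)
    (a b : ℝ) :
    (chiMat (M b)).det = (chiMat (M a)).det * Real.exp (2 * ∫ t in a..b, (A t).trace.re) := by
  have hderiv (t : ℝ) : HasDerivAt (fun s => (chiMat (M s)).det)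
      ((chiMat (A t)).trace * (chiMat (M t)).det) t :=
    hasDerivAt_det_of_hasDerivAt_eq_mul fun p q => by
      simpa only [chiMat_mul] using HasDerivAt.chiMat_apply (hM t) p q
  have htrace : Continuous fun t => (chiMat (A t)).trace := by
    simp only [trace_chiMat]
    exact continuous_const.mul
      (Complex.continuous_ofReal.comp (Quaternion.continuous_re.comp hA.matrix_trace))
  rw [eq_mul_exp_integral_of_hasDerivAt_eq_mul htrace hderiv a b]
  simp only [trace_chiMat, intervalIntegral.integral_const_mul, intervalIntegral.integral_ofReal,
    Complex.ofReal_exp, Complex.ofReal_mul, Complex.ofReal_ofNat]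

theorem stmt14_general {n : ℕ} (T : ℝ) (hT : 0 < T) (A M : ℝ → Matrix (Fin n) (Fin n) ℍ[ℝ])
    (hA : Continuous A) (hM : IsFundamental A M)
    (ρ : Fin n → ℂ)
    (hρ : IsStdEigs (Ring.inverse (M 0) * M T) (Multiset.map ρ Finset.univ.val)) :
    (∏ j, ‖ρ j‖) = Real.exp (∫ τ in (0:ℝ)..T, (Matrix.trace (A τ)).re) ∧
    ∀ μ : Fin n → ℂ, (∀ j, Complex.exp (μ j * (T : ℂ)) = ρ j) →
      (∑ j, μ j).re = (1 / T) * ∫ τ in (0:ℝ)..T, (Matrix.trace (A τ)).re := by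
  obtain ⟨hMderiv, hMunit⟩ := hM
  set I := ∫ τ in (0:ℝ)..T, (A τ).trace.re
  have hdet : (chiMat (Ring.inverse (M 0) * M T)).det = Real.exp (2 * I) := by
    rw [chiMat_mul, det_mul, det_chiMat_eq_mul_exp_integral hA hMderiv 0 T, ← mul_assoc,
      det_chiMat_inverse_mul_det_chiMat (hMunit 0), one_mul]
  have hsq : (∏ j, ‖ρ j‖) ^ 2 = Real.exp I ^ 2 := by
    have h := (det_chiMat_of_isStdEigs hρ).symm.trans hdet
    rw [Multiset.map_map] at h
    rw [← Finset.prod_pow, ← Real.exp_nat_mul]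
    exact_mod_cast h
  have hprod : ∏ j, ‖ρ j‖ = Real.exp I :=
    (pow_left_inj₀ (Finset.prod_nonneg fun j _ => norm_nonneg _) (Real.exp_pos I).le
      two_ne_zero).mp hsq
  refine ⟨hprod, fun μ hμ => ?_⟩
  have hexp : Real.exp (T * (∑ j, μ j).re) = Real.exp I := by
    rw [← hprod, Complex.re_sum, Finset.mul_sum, Real.exp_sum]
    refine Finset.prod_congr rfl fun j _ => ?_
    rw [← hμ j, Complex.norm_exp, Complex.re_mul_ofReal, mul_comm]
  rw [Real.exp_eq_exp] at hexp
  field_simp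
  linarith

/-- `∏_j |ρ_j| = exp(∫₀ᵀ Re(tr A))`, and if `e^{μ_j T} = ρ_j` then
`Re(Σ μ_j) = (1/T)∫₀ᵀ Re(tr A)`. -/
theorem stmt14 {n : ℕ} (T : ℝ) (hT : 0 < T) (A M : ℝ → Matrix (Fin n) (Fin n) ℍ[ℝ])
    (hA : Continuous A) (hAper : ∀ t, A (t + T) = A t) (hM : IsFundamental A M)
    (ρ : Fin n → ℂ)
    (hρ : IsStdEigs (Ring.inverse (M 0) * M T) (Multiset.map ρ Finset.univ.val)) :
    (∏ j, ‖ρ j‖) = Real.exp (∫ τ in (0:ℝ)..T, (Matrix.trace (A τ)).re) ∧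
    ∀ μ : Fin n → ℂ, (∀ j, Complex.exp (μ j * (T : ℂ)) = ρ j) →
      (∑ j, μ j).re = (1 / T) * ∫ τ in (0:ℝ)..T, (Matrix.trace (A τ)).re :=
  stmt14_general T hT A M hA hM ρ hρ
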